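/- Let J be as given, and suppose that every edge of the coding graph E_J is non-negative and that E_J contains no non-positive cycles. Then for every vertex J_μ = (μ, ν) ∈ J and every l ∈ ℕ, the collection {L_J(ω) : ω a path of length l in E_J with source J_μ} of L_J-labels of the length-l paths starting at J_μ is a partition of r(μ): the cylinder sets of these labels are pairwise disjoint and their union is Z(r(μ)). -/

import Mathlib

/-- A finite directed multigraph. -/
structure FinGraph where
  V : Type
  E : Type
  fintV : Fintype V
  fintE : Fintype E
  src : E → V
  rng : E → V

variable {G : FinGraph}

/-- A finite path in the graph `G`: a source vertex together with a compatible
list of edges (a vertex is a path of length 0). -/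
structure FPath (G : FinGraph) where
  source : G.V
  edges : List G.E
  head_src : ∀ e ∈ edges.head?, G.src e = source
  chain : edges.Chain' fun e f => G.rng e = G.src f

/-- The range (terminal vertex) of a finite path. -/
def FPath.range (p : FPath G) : G.V :=
  p.edges.getLast?.elim p.source G.rng

/-- The length-0 path at a vertex. -/
def FPath.nil (G : FinGraph) (v : G.V) : FPath G :=
  ⟨v, [], by simp, List.isChain_nil⟩

/-- `p.Prefix q` : the path `p` is an initial segment of the path `q`. -/
def FPath.Prefix (p q : FPath G) : Prop :=
  p.source = q.source ∧ p.edges <+: q.edges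

/-- The path obtained by removing the first edge (the tail `κ` of `ν = eκ`). -/
def FPath.tail (p : FPath G) : FPath G where
  source := p.edges.head?.elim p.source G.rng
  edges := p.edges.tail
  head_src := by
    cases hp : p.edges with
    | nil => simp
    | cons a l =>
      have h := p.chain
      rw [hp] at h; replace h := List.isChain_cons.1 h
      intro e he
      simp only [hp, List.head?_cons, Option.elim, List.tail_cons] at he ⊢
      exact (h.1 e he).symm
  chain := p.chain.tail

/-- An infinite path in the graph `G`. -/
structure IPath (G : FinGraph) where
  edges : ℕ → G.E
  chain : ∀ i, G.rng (edges i) = G.src (edges (i + 1))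

/-- The source vertex of an infinite path. -/
def IPath.source (p : IPath G) : G.V := G.src (p.edges 0)

/-- The cylinder set `Z(p)` of a finite path `p`: all infinite paths with prefix `p`. -/
def cylinder (p : FPath G) : Set (IPath G) :=
  {q | q.source = p.source ∧ ∀ i, (h : i < p.edges.length) → q.edges i = p.edges.get ⟨i, h⟩}

/-- A finite collection `S` of finite paths is a partition of the path `ν`:
the cylinder sets are pairwise disjoint with union `Z(ν)`. -/
def IsPartitionOfPath (S : Set (FPath G)) (ν : FPath G) : Prop :=
  S.Finite ∧ (∀ p ∈ S, ∀ q ∈ S, p ≠ q → cylinder p ∩ cylinder q = ∅) ∧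
    (⋃ p ∈ S, cylinder p) = cylinder ν

/-- A finite collection `S` of finite paths is a partition of the vertex `v`. -/
def IsPartitionOf (S : Set (FPath G)) (v : G.V) : Prop :=
  IsPartitionOfPath S (FPath.nil G v)

/-- Standing assumptions: no sinks, no sources, every cycle has an exit. -/
structure Standing (G : FinGraph) : Prop where
  no_sinks : ∀ v : G.V, ∃ e, G.src e = v
  no_sources : ∀ v : G.V, ∃ e, G.rng e = v
  cycles_exit : ∀ p : FPath G, p.edges ≠ [] → p.range = p.source →
    ∃ e ∈ p.edges, ∃ f, f ≠ e ∧ G.src f = G.src e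

/-- The combinatorial conditions making `u_J = Σ_{(μ,ν) ∈ J} S_μ S_ν^*` a unitary:
`J` is finite, `s(μ) = s(ν)`, `r(μ) = r(ν)`, `|ν| ≥ 1` for all `(μ,ν) ∈ J`, and both
families of cylinder sets are pairwise disjoint with union all of `E^∞`. -/
structure IsUnitaryJ (G : FinGraph) (J : Set (FPath G × FPath G)) : Prop where
  finite : J.Finite
  src_eq : ∀ p ∈ J, (Prod.fst p).source = (Prod.snd p).source
  rng_eq : ∀ p ∈ J, FPath.range (Prod.fst p) = FPath.range (Prod.snd p)
  ne_nil : ∀ p ∈ J, (Prod.snd p).edges ≠ []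
  disj₁ : ∀ p ∈ J, ∀ q ∈ J, p ≠ q → cylinder (Prod.fst p) ∩ cylinder (Prod.fst q) = ∅
  union₁ : (⋃ p ∈ J, cylinder (Prod.fst p)) = Set.univ
  disj₂ : ∀ p ∈ J, ∀ q ∈ J, p ≠ q → cylinder (Prod.snd p) ∩ cylinder (Prod.snd q) = ∅
  union₂ : (⋃ p ∈ J, cylinder (Prod.snd p)) = Set.univ

/-- Adjacency in the coding graph `E_J`: there is an edge from `p = (μ₁, e₁ν₁)` to
`q = (μ₂, e₂ν₂)` iff the tail `ν₁` and `μ₂` are prefix-comparable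
(the combinatorial content of `S_{ν₁}^* S_{μ₂} ≠ 0`). -/
def CGAdj (p q : FPath G × FPath G) : Prop :=
  FPath.Prefix p.2.tail q.1 ∨ FPath.Prefix q.1 p.2.tail

/-- The degree `|μ₂| − |ν₁|` of the coding-graph edge from `p` to `q`. -/
def cgDeg (p q : FPath G × FPath G) : ℤ :=
  (q.1.edges.length : ℤ) - (p.2.tail.edges.length : ℤ)

/-- `IsAppend p q r` : the path `r` is the concatenation `p q`. -/
def IsAppend (p q r : FPath G) : Prop :=
  r.source = p.source ∧ q.source = p.range ∧ r.edges = p.edges ++ q.edges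

/-- A finite path in the coding graph `E_J`, recorded by the (nonempty) list of
vertices of `J` it visits (a single vertex is a path of length 0). -/
structure CGPath (G : FinGraph) (J : Set (FPath G × FPath G)) where
  verts : List (FPath G × FPath G)
  ne : verts ≠ []
  mem : ∀ v ∈ verts, v ∈ J
  adj : verts.Chain' CGAdj

/-- The `E`-label of a path in the coding graph: the list of distinguished first
edges `e` of the second coordinates of the vertices it visits. -/
def CGPath.elabel {J : Set (FPath G × FPath G)} (ω : CGPath G J) : List G.E :=
  ω.verts.filterMap fun v => v.2.edges.head?

/-- `IsLabelOf l γ` : `γ` is the `L_J`-label of the coding-graph path visiting the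
vertices in the list `l` (all of whose edges are non-negative): the concatenation of
the `L_J`-labels of its edges, and the empty path at `r(μ)` for the length-0 path
at a vertex `(μ, eν)`. -/
inductive IsLabelOf : List (FPath G × FPath G) → FPath G → Prop
  | single (p : FPath G × FPath G) (γ : FPath G) :
      γ.edges = [] → γ.source = FPath.range p.1 → IsLabelOf [p] γ
  | cons (p q : FPath G × FPath G) (rest : List (FPath G × FPath G)) (α γ δ : FPath G) :
      IsAppend p.2.tail α q.1 → IsLabelOf (q :: rest) γ → IsAppend α γ δ →
      IsLabelOf (p :: q :: rest) δ

/-- Every edge of the coding graph `E_J` is non-negative. -/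
def AllEdgesNonneg (G : FinGraph) (J : Set (FPath G × FPath G)) : Prop :=
  ∀ p ∈ J, ∀ q ∈ J, CGAdj p q → 0 ≤ cgDeg p q

/-- The coding graph `E_J` contains a non-positive cycle. -/
def HasNonposCycle (G : FinGraph) (J : Set (FPath G × FPath G)) : Prop :=
  ∃ ω : CGPath G J, 2 ≤ ω.verts.length ∧ ω.verts.getLast ω.ne = ω.verts.head ω.ne ∧
    ω.verts.Chain' fun p q => cgDeg p q ≤ 0

/-- All outgoing edges of the vertex `p` in the coding graph `E_J` are positive. -/
def AllOutPositive (G : FinGraph) (J : Set (FPath G × FPath G))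
    (p : FPath G × FPath G) : Prop :=
  ∀ q ∈ J, CGAdj p q → 0 < cgDeg p q

/-- `IsSnoc p f q` : the path `q` is `p` extended by the single edge `f`. -/
def IsSnoc (p : FPath G) (f : G.E) (q : FPath G) : Prop :=
  q.source = p.source ∧ q.edges = p.edges ++ [f]

/-- `IsSplitting G J p J'` : `J'` is the splitting of `J` at the vertex `p = (μ, eν)`,
i.e. `J' = (J ∖ {(μ,eν)}) ∪ {(μf, eνf) : f ∈ E¹, s(f) = r(μ)}`. -/
def IsSplitting (G : FinGraph) (J : Set (FPath G × FPath G)) (p : FPath G × FPath G)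
    (J' : Set (FPath G × FPath G)) : Prop :=
  p ∈ J ∧ ∀ q, q ∈ J' ↔ (q ∈ J ∧ q ≠ p) ∨
    ∃ f, G.src f = FPath.range p.1 ∧ IsSnoc p.1 f q.1 ∧ IsSnoc p.2 f q.2

/-- The set of negative edges of the coding graph `E_J`. -/
def negEdgeSet (G : FinGraph) (J : Set (FPath G × FPath G)) :
    Set ((FPath G × FPath G) × (FPath G × FPath G)) :=
  {e | e.1 ∈ J ∧ e.2 ∈ J ∧ CGAdj e.1 e.2 ∧ cgDeg e.1 e.2 < 0}

/-- `IsFinalNeg G J p q ω d` : the edge from `p` to `q` in `E_J` is a final negative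
edge with destination `d`, via the zero path `ω` from `q` to `d`; the height of the
edge is `ω.verts.length - 1`. -/
def IsFinalNeg (G : FinGraph) (J : Set (FPath G × FPath G))
    (p q : FPath G × FPath G) (ω : CGPath G J) (d : FPath G × FPath G) : Prop :=
  p ∈ J ∧ q ∈ J ∧ CGAdj p q ∧ cgDeg p q < 0 ∧
    ω.verts.head ω.ne = q ∧ ω.verts.getLast ω.ne = d ∧
    (ω.verts.Chain' fun a b => cgDeg a b = 0) ∧ AllOutPositive G J d

/-- `(E_J, E)` is left-synchronizing with delay `m` : any two paths of length `m`
(i.e. with `m+1` vertices) in `E_J` with the same `E`-label have the same source. -/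
def LeftSyncDelay (G : FinGraph) (J : Set (FPath G × FPath G)) (m : ℕ) : Prop :=
  ∀ ω ξ : CGPath G J, ω.verts.length = m + 1 → ξ.verts.length = m + 1 →
    ω.elabel = ξ.elabel → ω.verts.head ω.ne = ξ.verts.head ξ.ne

/-- An infinite path in the coding graph `E_J`. -/
structure CGIPath (G : FinGraph) (J : Set (FPath G × FPath G)) where
  verts : ℕ → FPath G × FPath G
  mem : ∀ i, verts i ∈ J
  adj : ∀ i, CGAdj (verts i) (verts (i + 1))

/-- The infinite `E`-label of an infinite coding-graph path is the infinite path `α`. -/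
def ELabelInf {J : Set (FPath G × FPath G)} (ω : CGIPath G J) (α : IPath G) : Prop :=
  ∀ i, (ω.verts i).2.edges.head? = some (α.edges i)

/-- A transducer with input alphabet `A`, output alphabet `B`, a finite state set,
an initial state and a transition function. -/
structure Transducer (A B : Type) where
  S : Type
  finS : Finite S
  init : S
  tr : S → A → S × List B

/-- The state sequence of a transducer on an infinite input word. -/
def Transducer.states {A B : Type} (T : Transducer A B) (α : ℕ → A) : ℕ → T.S
  | 0 => T.init
  | n + 1 => (T.tr (T.states α n) (α n)).1

/-- The `n`-th output block of a transducer on an infinite input word. -/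
def Transducer.outBlock {A B : Type} (T : Transducer A B) (α : ℕ → A) (n : ℕ) : List B :=
  (T.tr (T.states α n) (α n)).2

/-- The concatenation of the first `n` blocks of a sequence of finite words. -/
def joinUpTo {X : Type} (f : ℕ → List X) (n : ℕ) : List X :=
  ((List.range n).map f).flatten

/-- Two infinite concatenations of sequences of finite words are equal. -/
def StreamsEq {X : Type} (f g : ℕ → List X) : Prop :=
  (∀ n, ∃ m, joinUpTo f n <+: joinUpTo g m) ∧ ∀ n, ∃ m, joinUpTo g n <+: joinUpTo f m

/-- The type of edges of the coding graph `E_J`. -/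
def CGEdgeT (G : FinGraph) (J : Set (FPath G × FPath G)) : Type :=
  {e : (FPath G × FPath G) × (FPath G × FPath G) // e.1 ∈ J ∧ e.2 ∈ J ∧ CGAdj e.1 e.2}

/-- The sequence of edges of an infinite coding-graph path. -/
def CGIPath.edgeSeq {J : Set (FPath G × FPath G)} (ω : CGIPath G J) (i : ℕ) : CGEdgeT G J :=
  ⟨(ω.verts i, ω.verts (i + 1)), ω.mem i, ω.mem (i + 1), ω.adj i⟩

/-!
Induction on `l`. Write `p = (μ, eκ)`. As all edges of `E_J` are non-negative, the successors
`q = (μ', ν')` of `p` are the elements of `J` with `κ ≼ μ'`; since the first coordinates of `J`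
partition `E^∞`, these `μ'` partition `Z(κ)`, so the paths `α_q` with `κ α_q = μ'` partition
`r(κ) = r(μ)`. A path of length `l + 1` from `p` is a step to some `q` followed by a path of
length `l` from `q`, and its label is `α_q γ` with `γ` the label of the latter. By induction these
`γ` partition `r(μ') = r(α_q)`, and refining the partition `{α_q}` by them partitions `r(μ)`.
-/

namespace FPath

variable {p q r : FPath G}

theorem ext (hs : p.source = q.source) (he : p.edges = q.edges) : p = q := by
  cases p; cases q; simp_all

theorem range_of_edges_eq_nil (h : p.edges = []) : p.range = p.source := by
  simp [FPath.range, h]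

theorem range_of_getLast? {e : G.E} (h : p.edges.getLast? = some e) : p.range = G.rng e := by
  simp [FPath.range, h]

theorem range_eq_rng_getElem {i : ℕ} (h : i + 1 = p.edges.length) :
    p.range = G.rng (p.edges[i]'(by omega)) := by
  apply range_of_getLast?
  rw [List.getLast?_eq_getElem?, show p.edges.length - 1 = i by omega]
  simp

theorem tail_range (h : p.edges ≠ []) : p.tail.range = p.range := by
  obtain ⟨e, t, hp⟩ := List.exists_cons_of_ne_nil h
  cases t <;> simp [FPath.range, FPath.tail, hp, List.getLast?_eq_some_getLast]

theorem Prefix.exists_isAppend (h : p.Prefix r) : ∃ q : FPath G, IsAppend p q r := by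
  obtain ⟨hs, t, ht⟩ := h
  have hch := r.chain
  rw [← ht, List.Chain', List.isChain_append] at hch
  obtain ⟨-, hct, hlink⟩ := hch
  refine ⟨⟨p.range, t, fun e he => ?_, hct⟩, hs.symm, rfl, ht.symm⟩
  cases hp : p.edges.getLast? with
  | none =>
    have hpn : p.edges = [] := List.getLast?_eq_none_iff.mp hp
    rw [range_of_edges_eq_nil hpn, hs]
    exact r.head_src e (by rw [← ht, hpn, List.nil_append]; exact he)
  | some g =>
    rw [range_of_getLast? hp]
    exact (hlink g (by rw [hp]; rfl) e he).symm

def append (p q : FPath G) (h : q.source = p.range) : FPath G where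
  source := p.source
  edges := p.edges ++ q.edges
  head_src e he := by
    cases hp : p.edges with
    | nil =>
      rw [hp, List.nil_append] at he
      rw [q.head_src e he, h, range_of_edges_eq_nil hp]
    | cons a t =>
      rw [hp, List.cons_append, List.head?_cons, Option.mem_some_iff] at he
      exact p.head_src _ (by simp [hp, he])
  chain := by
    rw [List.Chain', List.isChain_append]
    refine ⟨p.chain, q.chain, fun x hx y hy => ?_⟩
    rw [q.head_src y hy, h, range_of_getLast? hx]

end FPath

theorem isAppend_append (p q : FPath G) (h : q.source = p.range) :
    IsAppend p q (p.append q h) := ⟨rfl, h, rfl⟩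

namespace IsAppend

variable {p q q' r r' : FPath G}

theorem prefix_left (h : IsAppend p q r) : p.Prefix r :=
  ⟨h.1.symm, q.edges, h.2.2.symm⟩

theorem unique (h : IsAppend p q r) (h' : IsAppend p q r') : r = r' :=
  FPath.ext (h.1.trans h'.1.symm) (h.2.2.trans h'.2.2.symm)

theorem cancel_left (h : IsAppend p q r) (h' : IsAppend p q' r) : q = q' :=
  FPath.ext (h.2.1.trans h'.2.1.symm) (List.append_cancel_left (h.2.2.symm.trans h'.2.2))

theorem range_eq (h : IsAppend p q r) : r.range = q.range := by
  have hq := h.2.1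
  simp only [FPath.range, h.2.2, h.1, List.getLast?_append] at hq ⊢
  cases q.edges.getLast? <;> simp [hq]

end IsAppend

theorem IPath.ext {x y : IPath G} (h : x.edges = y.edges) : x = y := by
  cases x; cases y; simp_all

def IPath.drop (x : IPath G) (n : ℕ) : IPath G where
  edges i := x.edges (i + n)
  chain i := by simpa [Nat.add_right_comm] using x.chain (i + n)

def FPath.appendInf (p : FPath G) (x : IPath G) (h : x.source = p.range) : IPath G where
  edges i := if hi : i < p.edges.length then p.edges[i] else x.edges (i - p.edges.length)
  chain i := by
    rcases lt_trichotomy (i + 1) p.edges.length with hi | hi | hi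
    · simp only [dif_pos hi, dif_pos (show i < p.edges.length by omega)]
      exact List.isChain_iff_getElem.mp p.chain i hi
    · simp only [dif_pos (show i < p.edges.length by omega), hi, lt_irrefl, dite_false,
        Nat.sub_self]
      rw [← FPath.range_eq_rng_getElem hi, ← h]
      rfl
    · simp only [dif_neg (show ¬i < p.edges.length by omega), dif_neg (not_lt.2 hi.le)]
      rw [show i + 1 - p.edges.length = i - p.edges.length + 1 by omega]
      exact x.chain _

section Cylinder

variable {p q r : FPath G} {x : IPath G}

theorem mem_cylinder_iff : x ∈ cylinder p ↔
    x.source = p.source ∧ ∀ i (h : i < p.edges.length), x.edges i = p.edges[i] :=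
  Iff.rfl

theorem mem_cylinder_nil {v : G.V} : x ∈ cylinder (FPath.nil G v) ↔ x.source = v := by
  simp [cylinder, FPath.nil]

theorem FPath.Prefix.cylinder_subset (h : p.Prefix r) : cylinder r ⊆ cylinder p := by
  intro x hx
  refine ⟨hx.1.trans h.1.symm, fun i hi => ?_⟩
  rw [hx.2 i (hi.trans_le h.2.length_le)]
  exact (h.2.getElem hi).symm

theorem source_drop_of_mem_cylinder (hx : x ∈ cylinder p) :
    (x.drop p.edges.length).source = p.range := by
  show G.src (x.edges (0 + p.edges.length)) = p.range
  rw [Nat.zero_add]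
  cases hn : p.edges.length with
  | zero => rw [FPath.range_of_edges_eq_nil (List.length_eq_zero_iff.1 hn)]; exact hx.1
  | succ n =>
    rw [← x.chain n, hx.2 n (by omega), FPath.range_eq_rng_getElem hn.symm]
    rfl

theorem appendInf_mem_cylinder (h : x.source = p.range) : p.appendInf x h ∈ cylinder p := by
  refine ⟨?_, fun i hi => by simp [FPath.appendInf, hi]⟩
  cases hp : p.edges with
  | nil =>
    simpa [IPath.source, FPath.appendInf, hp, FPath.range_of_edges_eq_nil hp] using h
  | cons e t => exact p.head_src _ (by simp [FPath.appendInf, hp])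

theorem drop_appendInf (h : x.source = p.range) : (p.appendInf x h).drop p.edges.length = x :=
  IPath.ext <| funext fun i => by simp [IPath.drop, FPath.appendInf]

theorem IsAppend.mem_cylinder_iff (h : IsAppend p q r) :
    x ∈ cylinder r ↔ x ∈ cylinder p ∧ x.drop p.edges.length ∈ cylinder q := by
  have hr : r.edges = p.edges ++ q.edges := h.2.2
  have hlen : r.edges.length = p.edges.length + q.edges.length := by simp [hr]
  simp only [_root_.mem_cylinder_iff]
  constructor
  · rintro ⟨hs, he⟩
    have hxp : x ∈ cylinder p := _root_.mem_cylinder_iff.2 ⟨hs.trans h.1, fun i hi => by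
      rw [he i (by omega), List.getElem_of_eq hr, List.getElem_append_left hi]⟩
    refine ⟨hxp, (source_drop_of_mem_cylinder hxp).trans h.2.1.symm, fun i hi => ?_⟩
    rw [IPath.drop, he _ (by omega), List.getElem_of_eq hr, List.getElem_append_right (by omega)]
    simp
  · rintro ⟨hxp, hxq⟩
    refine ⟨hxp.1.trans h.1.symm, fun i hi => ?_⟩
    rw [List.getElem_of_eq hr, List.getElem_append]
    split_ifs with hip
    · exact hxp.2 i hip
    · simpa [IPath.drop, Nat.sub_add_cancel (not_lt.1 hip)] using
        hxq.2 (i - p.edges.length) (by omega)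

theorem IsAppend.cylinder_inter_eq_empty_iff {q' r' : FPath G} (h : IsAppend p q r)
    (h' : IsAppend p q' r') :
    cylinder r ∩ cylinder r' = ∅ ↔ cylinder q ∩ cylinder q' = ∅ := by
  simp only [Set.eq_empty_iff_forall_notMem, Set.mem_inter_iff, not_and]
  constructor
  · intro hr y hy hy'
    have hs : y.source = p.range := hy.1.trans h.2.1
    refine hr (p.appendInf y hs) ?_ ?_ <;>
      simp only [IsAppend.mem_cylinder_iff h, IsAppend.mem_cylinder_iff h', drop_appendInf,
        appendInf_mem_cylinder, true_and, hy, hy']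
  · intro hq y hy hy'
    exact hq _ (h.mem_cylinder_iff.1 hy).2 (h'.mem_cylinder_iff.1 hy').2

theorem prefix_of_mem_cylinder_of_length_le (hp : x ∈ cylinder p) (hq : x ∈ cylinder q)
    (hle : p.edges.length ≤ q.edges.length) : p.Prefix q := by
  refine ⟨hp.1.symm.trans hq.1, List.prefix_iff_eq_take.2 <| List.ext_getElem (by simp [hle])
    fun i hi _ => ?_⟩
  rw [List.getElem_take, ← (mem_cylinder_iff.1 hp).2 i hi, (mem_cylinder_iff.1 hq).2]

theorem prefix_or_prefix_of_mem_cylinder (hp : x ∈ cylinder p) (hq : x ∈ cylinder q) :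
    p.Prefix q ∨ q.Prefix p :=
  (le_total p.edges.length q.edges.length).imp
    (prefix_of_mem_cylinder_of_length_le hp hq) (prefix_of_mem_cylinder_of_length_le hq hp)

end Cylinder

/-- Unlike `IsPartitionOfPath`, pieces are indexed: distinct indices may carry the same path
only if its cylinder set is empty. -/
def IsPartitionFamily {ι : Type*} (I : Set ι) (f : ι → FPath G) (ν : FPath G) : Prop :=
  I.Finite ∧ (∀ i ∈ I, ∀ j ∈ I, i ≠ j → cylinder (f i) ∩ cylinder (f j) = ∅) ∧
    (⋃ i ∈ I, cylinder (f i)) = cylinder ν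

theorem isPartitionOf_singleton_nil (v : G.V) : IsPartitionOf {FPath.nil G v} v :=
  ⟨Set.finite_singleton _, fun _ hp _ hq hne => absurd (hp.trans hq.symm) hne, by simp⟩

section Partition

variable {ι : Type*} {I : Set ι}

theorem IsPartitionFamily.cancel_left {μ α : ι → FPath G} {κ : FPath G}
    (hμ : IsPartitionFamily I μ κ) (hα : ∀ i ∈ I, IsAppend κ (α i) (μ i)) :
    IsPartitionFamily I α (FPath.nil G κ.range) := by
  obtain ⟨hfin, hdisj, hcover⟩ := hμ
  refine ⟨hfin, fun i hi j hj hij =>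
    ((hα i hi).cylinder_inter_eq_empty_iff (hα j hj)).1 (hdisj i hi j hj hij), ?_⟩
  ext y
  simp only [Set.mem_iUnion, mem_cylinder_nil, exists_prop]
  constructor
  · rintro ⟨i, hi, hy⟩
    exact hy.1.trans (hα i hi).2.1
  · intro hy
    have hκy : κ.appendInf y hy ∈ ⋃ i ∈ I, cylinder (μ i) := hcover ▸ appendInf_mem_cylinder hy
    obtain ⟨i, hi, hmem⟩ := Set.mem_iUnion₂.1 hκy
    exact ⟨i, hi, drop_appendInf hy ▸ ((hα i hi).mem_cylinder_iff.1 hmem).2⟩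

theorem isPartitionOf_append {α : ι → FPath G} {v : G.V}
    (hα : IsPartitionFamily I α (FPath.nil G v)) {S : ι → Set (FPath G)}
    (hS : ∀ i ∈ I, IsPartitionOf (S i) (α i).range) :
    IsPartitionOf {δ | ∃ i ∈ I, ∃ β ∈ S i, IsAppend (α i) β δ} v := by
  obtain ⟨hfin, hdisj, hcover⟩ := hα
  refine ⟨?_, ?_, ?_⟩
  · refine (hfin.biUnion fun i hi => (hS i hi).1.biUnion fun β _ =>
      Set.Subsingleton.finite (s := {δ | IsAppend (α i) β δ}) fun _ h _ h' => h.unique h').subset ?_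
    rintro δ ⟨i, hi, β, hβ, hδ⟩
    exact Set.mem_biUnion hi (Set.mem_biUnion hβ hδ)
  · rintro δ ⟨i, hi, β, hβ, hδ⟩ δ' ⟨j, hj, β', hβ', hδ'⟩ hne
    by_cases hij : i = j
    · subst hij
      have hββ' : β ≠ β' := by
        rintro rfl
        exact hne (hδ.unique hδ')
      exact (hδ.cylinder_inter_eq_empty_iff hδ').2 ((hS i hi).2.1 β hβ β' hβ' hββ')
    · exact Set.subset_eq_empty (Set.inter_subset_inter hδ.prefix_left.cylinder_subset
        hδ'.prefix_left.cylinder_subset) (hdisj i hi j hj hij)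
  · ext x
    constructor
    · intro hx
      obtain ⟨δ, ⟨i, hi, β, -, hδ⟩, hx⟩ := Set.mem_iUnion₂.1 hx
      exact hcover ▸ Set.mem_biUnion hi (hδ.prefix_left.cylinder_subset hx)
    · intro hx
      obtain ⟨i, hi, hxi⟩ := Set.mem_iUnion₂.1 (hcover ▸ hx)
      have hsrc := source_drop_of_mem_cylinder hxi
      have hdrop : x.drop (α i).edges.length ∈ ⋃ β ∈ S i, cylinder β := by
        rw [(hS i hi).2.2, mem_cylinder_nil]
        exact hsrc
      obtain ⟨β, hβ, hxβ⟩ := Set.mem_iUnion₂.1 hdrop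
      have hcat := isAppend_append (α i) β (hxβ.1.symm.trans hsrc)
      exact Set.mem_biUnion ⟨i, hi, β, hβ, hcat⟩ (hcat.mem_cylinder_iff.2 ⟨hxi, hxβ⟩)

end Partition

section CodingGraph

variable {J : Set (FPath G × FPath G)} {p : FPath G × FPath G}

def cgSucc (J : Set (FPath G × FPath G)) (p : FPath G × FPath G) : Set (FPath G × FPath G) :=
  {q | q ∈ J ∧ CGAdj p q}

theorem prefix_of_cgAdj {q : FPath G × FPath G} (hadj : CGAdj p q) (hdeg : 0 ≤ cgDeg p q) :
    p.2.tail.Prefix q.1 := by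
  rcases hadj with h | h
  · exact h
  · have hlen : q.1.edges.length = p.2.tail.edges.length :=
      le_antisymm h.2.length_le (by unfold cgDeg at hdeg; omega)
    exact ⟨h.1.symm, by rw [h.2.eq_of_length hlen]⟩

theorem isPartitionFamily_cgSucc (hJ : IsUnitaryJ G J) (hnn : AllEdgesNonneg G J) (hp : p ∈ J) :
    IsPartitionFamily (cgSucc J p) Prod.fst p.2.tail := by
  refine ⟨hJ.finite.subset fun q hq => hq.1,
    fun q hq q' hq' hne => hJ.disj₁ q hq.1 q' hq'.1 hne, ?_⟩
  ext x
  constructor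
  · intro hx
    obtain ⟨q, ⟨hq, hadj⟩, hxq⟩ := Set.mem_iUnion₂.1 hx
    exact (prefix_of_cgAdj hadj (hnn p hp q hq hadj)).cylinder_subset hxq
  · intro hx
    obtain ⟨q, hq, hxq⟩ := Set.mem_iUnion₂.1 (hJ.union₁ ▸ Set.mem_univ x)
    exact Set.mem_biUnion ⟨hq, prefix_or_prefix_of_mem_cylinder hx hxq⟩ hxq

def outLabels (J : Set (FPath G × FPath G)) (p : FPath G × FPath G) (l : ℕ) : Set (FPath G) :=
  {γ | ∃ ω : CGPath G J, ω.verts.length = l + 1 ∧ ω.verts.head ω.ne = p ∧ IsLabelOf ω.verts γ}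

theorem outLabels_zero (hp : p ∈ J) : outLabels J p 0 = {FPath.nil G p.1.range} := by
  ext γ
  constructor
  · rintro ⟨⟨verts, ne, _, _⟩, hlen, hhead, hlab⟩
    obtain ⟨a, rfl⟩ := List.length_eq_one_iff.1 hlen
    obtain rfl : a = p := hhead
    cases hlab with
    | single _ _ he hs => exact FPath.ext hs he
  · rintro rfl
    exact ⟨⟨[p], List.cons_ne_nil _ _, by simpa, List.isChain_singleton p⟩, rfl, rfl,
      IsLabelOf.single p _ rfl rfl⟩

theorem mem_outLabels_succ (hp : p ∈ J) {l : ℕ} {γ : FPath G} :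
    γ ∈ outLabels J p (l + 1) ↔ ∃ q ∈ cgSucc J p, ∃ α, IsAppend p.2.tail α q.1 ∧
      ∃ β ∈ outLabels J q l, IsAppend α β γ := by
  constructor
  · rintro ⟨⟨(_ | ⟨a, _ | ⟨b, t⟩⟩), ne, mem, adj⟩, hlen, rfl, hlab⟩
    · exact absurd rfl ne
    · simp at hlen
    · rw [List.Chain', List.isChain_cons_cons] at adj
      cases hlab with
      | cons _ _ _ α β _ hα hβ hγ =>
        refine ⟨b, ⟨mem b (by simp), adj.1⟩, α, hα, β, ⟨⟨b :: t, List.cons_ne_nil _ _,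
          fun v hv => mem v (List.mem_cons_of_mem _ hv), adj.2⟩, by simpa using hlen, rfl, hβ⟩, hγ⟩
  · rintro ⟨q, ⟨hq, hadj⟩, α, hα, β, ⟨⟨(_ | ⟨a, t⟩), ne, mem, adj⟩, hlen, rfl, hβ⟩, hγ⟩
    · exact absurd rfl ne
    · refine ⟨⟨p :: a :: t, List.cons_ne_nil _ _, ?_, List.isChain_cons_cons.2 ⟨hadj, adj⟩⟩,
        by simpa using hlen, rfl, IsLabelOf.cons p a t α β γ hα hβ hγ⟩
      rintro v (_ | ⟨_, hv⟩)
      · exact hp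
      · exact mem v hv

theorem outLabels_succ (hp : p ∈ J) {l : ℕ} {α : FPath G × FPath G → FPath G}
    (hα : ∀ q ∈ cgSucc J p, IsAppend p.2.tail (α q) q.1) :
    outLabels J p (l + 1) = {δ | ∃ q ∈ cgSucc J p, ∃ β ∈ outLabels J q l, IsAppend (α q) β δ} := by
  ext δ
  rw [mem_outLabels_succ hp]
  constructor
  · rintro ⟨q, hq, α', hα', β, hβ, hδ⟩
    exact ⟨q, hq, β, hβ, hα'.cancel_left (hα q hq) ▸ hδ⟩
  · rintro ⟨q, hq, hβ⟩
    exact ⟨q, hq, α q, hα q hq, hβ⟩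

end CodingGraph

theorem out_paths_partition_general (G : FinGraph)
    (J : Set (FPath G × FPath G)) (hJ : IsUnitaryJ G J)
    (hnn : AllEdgesNonneg G J)
    (p : FPath G × FPath G) (hp : p ∈ J) (l : ℕ) :
    IsPartitionOf {γ : FPath G | ∃ ω : CGPath G J, ω.verts.length = l + 1 ∧
        ω.verts.head ω.ne = p ∧ IsLabelOf ω.verts γ}
      (FPath.range p.1) := by
  show IsPartitionOf (outLabels J p l) _
  induction l generalizing p with
  | zero =>
    rw [outLabels_zero hp]
    exact isPartitionOf_singleton_nil _
  | succ l ih =>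
    have : Nonempty (FPath G) := ⟨p.1⟩
    choose! α hα using fun q (hq : q ∈ cgSucc J p) =>
      (prefix_of_cgAdj hq.2 (hnn p hp q hq.1 hq.2)).exists_isAppend
    have hrange : p.2.tail.range = p.1.range := by
      rw [FPath.tail_range (hJ.ne_nil p hp), hJ.rng_eq p hp]
    rw [outLabels_succ hp hα, ← hrange]
    refine isPartitionOf_append ((isPartitionFamily_cgSucc hJ hnn hp).cancel_left hα)
      fun q hq => ?_
    rw [← (hα q hq).range_eq]
    exact ih q hq.1

/-- Lemma 5.3: if all edges of `E_J` are non-negative and `E_J` has no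
non-positive cycles, then for every vertex `J_μ ∈ J` and every `l`, the `L_J`-labels of
the length-`l` paths in `E_J` starting at `J_μ` form a partition of `r(μ)`. -/
theorem out_paths_partition (G : FinGraph) (hG : Standing G)
    (J : Set (FPath G × FPath G)) (hJ : IsUnitaryJ G J)
    (hnn : AllEdgesNonneg G J) (hnc : ¬ HasNonposCycle G J)
    (p : FPath G × FPath G) (hp : p ∈ J) (l : ℕ) :
    IsPartitionOf {γ : FPath G | ∃ ω : CGPath G J, ω.verts.length = l + 1 ∧
        ω.verts.head ω.ne = p ∧ IsLabelOf ω.verts γ}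
      (FPath.range p.1) :=
  out_paths_partition_general G J hJ hnn p hp l
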